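/- arXiv:2508.07939 — 4 statements merged into one kernel-verified Lean document; each statement's English description precedes it below -/
import Mathlib

section
/- The integral of exp(-tan²(x)) over x from 0 to π/2 equals (eπ/2)·erfc(1). -/
/-!
Substituting `t = tan x` turns the integral into `∫₀^∞ e^{-a t²} / (1 + t²) dt`. Writing
`1 / (1 + t²) = ∫₀^∞ e^{-(1 + t²) s} ds` and swapping the two integrals (the integrand is positive)
leaves the Gaussian integrals `∫₀^∞ e^{-(a + s) t²} dt = √(π / (a + s)) / 2`, and the substitution
`s = u² - a` turns `∫₀^∞ e^{-s} √(π / (a + s)) / 2 ds` into `e^a √π ∫_{√a}^∞ e^{-u²} du`.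
-/

open Real MeasureTheory

noncomputable def erfc (x : ℝ) : ℝ := (2 / Real.sqrt π) * ∫ t in Set.Ioi x, Real.exp (-t ^ 2)

open Set

lemma image_arctan_Ioi_zero : arctan '' Ioi 0 = Ioo 0 (π / 2) := by
  ext x
  constructor
  · rintro ⟨t, ht, rfl⟩
    exact ⟨arctan_pos.2 ht, arctan_lt_pi_div_two t⟩
  · rintro ⟨hx₀, hx₁⟩
    exact ⟨tan x, tan_pos_of_pos_of_lt_pi_div_two hx₀ hx₁, arctan_tan (by linarith) hx₁⟩

lemma integral_comp_tan_Ioo {E : Type*} [NormedAddCommGroup E] [NormedSpace ℝ E] (f : ℝ → E) :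
    ∫ x in Ioo 0 (π / 2), f (tan x) = ∫ t in Ioi 0, (1 + t ^ 2)⁻¹ • f t := by
  rw [← image_arctan_Ioi_zero, integral_image_eq_integral_abs_deriv_smul measurableSet_Ioi
    (fun t _ ↦ (hasDerivAt_arctan t).hasDerivWithinAt) arctan_injective.injOn]
  refine setIntegral_congr_fun measurableSet_Ioi fun t _ ↦ ?_
  rw [tan_arctan, abs_of_pos (by positivity), one_div]

lemma integral_exp_neg_mul_Ioi_zero {b : ℝ} (hb : 0 < b) :
    ∫ s in Ioi 0, exp (-(b * s)) = b⁻¹ := by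
  simpa [neg_mul, div_neg, neg_div] using integral_exp_mul_Ioi (neg_neg_of_pos hb) 0

lemma image_sq_sub_Ioi_sqrt {a : ℝ} (ha : 0 ≤ a) : (fun u ↦ u ^ 2 - a) '' Ioi √a = Ioi 0 := by
  ext s
  constructor
  · rintro ⟨u, hu, rfl⟩
    simpa using (sqrt_lt' ((sqrt_nonneg a).trans_lt hu)).1 hu
  · intro hs
    refine ⟨√(a + s), ?_, ?_⟩
    · exact sqrt_lt_sqrt ha (by simpa using hs)
    · simp [sq_sqrt (by linarith [mem_Ioi.1 hs] : 0 ≤ a + s)]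

lemma integral_comp_sq_sub_Ioi {E : Type*} [NormedAddCommGroup E] [NormedSpace ℝ E]
    (g : ℝ → E) {a : ℝ} (ha : 0 ≤ a) :
    ∫ s in Ioi 0, g s = ∫ u in Ioi √a, (2 * u) • g (u ^ 2 - a) := by
  have hpos : ∀ u ∈ Ioi √a, 0 < u := fun u hu ↦ (sqrt_nonneg a).trans_lt hu
  have hinj : InjOn (fun u ↦ u ^ 2 - a) (Ioi √a) := fun u hu v hv huv ↦
    (pow_left_strictMonoOn₀ two_ne_zero).injOn (hpos u hu).le (hpos v hv).le (sub_left_inj.1 huv)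
  rw [← image_sq_sub_Ioi_sqrt ha, integral_image_eq_integral_abs_deriv_smul measurableSet_Ioi
    (fun u _ ↦ ((hasDerivAt_pow 2 u).sub_const a).hasDerivWithinAt) hinj]
  refine setIntegral_congr_fun measurableSet_Ioi fun u hu ↦ ?_
  simp [abs_of_pos (hpos u hu)]

lemma integrable_exp_neg_mul_sq_div_one_add_sq {a : ℝ} (ha : 0 < a) :
    Integrable (fun t : ℝ ↦ exp (-a * t ^ 2) / (1 + t ^ 2)) := by
  refine (integrable_exp_neg_mul_sq ha).mono'
    (((by fun_prop : Continuous fun t : ℝ ↦ exp (-a * t ^ 2)).div (by fun_prop)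
      fun t ↦ by positivity).aestronglyMeasurable) (ae_of_all _ fun t ↦ ?_)
  rw [norm_of_nonneg (by positivity)]
  exact div_le_self (exp_nonneg _) (by nlinarith [sq_nonneg t])

lemma integral_exp_neg_mul_sq_div_one_add_sq {a : ℝ} (ha : 0 < a) :
    ∫ t in Ioi 0, exp (-a * t ^ 2) / (1 + t ^ 2)
      = ∫ s in Ioi 0, exp (-s) * (√(π / (a + s)) / 2) := by
  set F : ℝ → ℝ → ℝ := fun t s ↦ exp (-a * t ^ 2) * exp (-((1 + t ^ 2) * s)) with hF
  have hF_nonneg : ∀ t s, 0 ≤ F t s := fun t s ↦ by positivity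
  have hF_inner : ∀ t, ∫ s in Ioi 0, F t s = exp (-a * t ^ 2) / (1 + t ^ 2) := fun t ↦ by
    simp only [hF]
    rw [integral_const_mul, integral_exp_neg_mul_Ioi_zero (by positivity), div_eq_mul_inv]
  have hF_int : Integrable (Function.uncurry F)
      ((volume.restrict (Ioi 0)).prod (volume.restrict (Ioi 0))) := by
    rw [integrable_prod_iff (by fun_prop)]
    refine ⟨ae_of_all _ fun t ↦ ?_, ?_⟩
    · convert (exp_neg_integrableOn_Ioi 0 (by positivity : 0 < 1 + t ^ 2)).const_mul
        (exp (-a * t ^ 2)) using 4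
      simp only [hF, Function.uncurry_apply_pair, neg_mul]
    · simp_rw [Function.uncurry_apply_pair, norm_of_nonneg (hF_nonneg _ _), hF_inner]
      exact (integrable_exp_neg_mul_sq_div_one_add_sq ha).integrableOn
  calc ∫ t in Ioi 0, exp (-a * t ^ 2) / (1 + t ^ 2)
      = ∫ t in Ioi 0, ∫ s in Ioi 0, F t s := by simp_rw [hF_inner]
    _ = ∫ s in Ioi 0, ∫ t in Ioi 0, F t s := integral_integral_swap hF_int
    _ = ∫ s in Ioi 0, exp (-s) * (√(π / (a + s)) / 2) := by
      refine setIntegral_congr_fun measurableSet_Ioi fun s _ ↦ ?_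
      have hFs : ∀ t, F t s = exp (-s) * exp (-(a + s) * t ^ 2) := fun t ↦ by
        simp only [hF, ← exp_add]; ring_nf
      simp_rw [hFs, integral_const_mul, integral_gaussian_Ioi]

lemma integral_exp_neg_mul_sqrt_pi_div_add {a : ℝ} (ha : 0 < a) :
    ∫ s in Ioi 0, exp (-s) * (√(π / (a + s)) / 2) = exp a * √π * ∫ u in Ioi √a, exp (-u ^ 2) := by
  rw [integral_comp_sq_sub_Ioi _ ha.le, ← integral_const_mul]
  refine setIntegral_congr_fun measurableSet_Ioi fun u hu ↦ ?_
  have hu₀ : 0 < u := (sqrt_nonneg a).trans_lt hu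
  rw [smul_eq_mul, add_sub_cancel, sqrt_div pi_pos.le, sqrt_sq hu₀.le,
    show -(u ^ 2 - a) = a + -u ^ 2 by ring, exp_add]
  field_simp

theorem integral_exp_neg_mul_tan_sq {a : ℝ} (ha : 0 < a) :
    ∫ x in 0..π / 2, exp (-a * tan x ^ 2) = exp a * π / 2 * erfc √a := by
  rw [intervalIntegral.integral_of_le (by positivity), integral_Ioc_eq_integral_Ioo,
    integral_comp_tan_Ioo (fun t ↦ exp (-a * t ^ 2))]
  simp_rw [smul_eq_mul, inv_mul_eq_div]
  rw [integral_exp_neg_mul_sq_div_one_add_sq ha, integral_exp_neg_mul_sqrt_pi_div_add ha, erfc]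
  field_simp
  rw [sq_sqrt pi_pos.le, mul_comm]

theorem stmt_2 :
    ∫ x in (0:ℝ)..(π / 2), Real.exp (-(Real.tan x) ^ 2)
      = (Real.exp 1 * π / 2) * erfc 1 := by
  simpa using integral_exp_neg_mul_tan_sq one_pos
end

section
/- The integral of exp(-csc²(x)) over x from 0 to π/2 equals (π/2)·erfc(1). -/
open Real MeasureTheory

/-!
Reflecting `x ↦ π/2 - x` and substituting `x = arctan t` turns the integral into
`∫₀^∞ e^{-(1+t²)} / (1+t²) dt`. Writing `e^{-c}/c = ∫₁^∞ e^{-sc} ds`, exchanging the integrals and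
evaluating the inner Gaussian integral gives `∫₁^∞ e^{-s} √(π/s) / 2 ds`, which the substitution
`s = u²` turns into `√π ∫₁^∞ e^{-u²} du = (π/2) erfc 1`.
-/

open Set

theorem integral_Ioi_sqrt_comp_sq {E : Type*} [NormedAddCommGroup E] [NormedSpace ℝ E]
    (g : ℝ → E) {b : ℝ} (hb : 0 ≤ b) :
    ∫ u in Ioi √b, (2 * u) • g (u ^ 2) = ∫ s in Ioi b, g s := by
  have hpos : ∀ u ∈ Ioi √b, 0 < u := fun u hu => (sqrt_nonneg b).trans_lt hu
  have himage : (fun u : ℝ => u ^ 2) '' Ioi √b = Ioi b := by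
    ext s
    constructor
    · rintro ⟨u, hu, rfl⟩
      exact (sqrt_lt' (hpos u hu)).1 hu
    · intro hs
      exact ⟨√s, sqrt_lt_sqrt hb hs, sq_sqrt (hb.trans hs.le)⟩
  have hinj : InjOn (fun u : ℝ => u ^ 2) (Ioi √b) := fun u hu v hv huv =>
    (pow_left_inj₀ (hpos u hu).le (hpos v hv).le two_ne_zero).1 huv
  rw [← himage, integral_image_eq_integral_abs_deriv_smul measurableSet_Ioi
    (fun u _ => by simpa using (hasDerivAt_pow 2 u).hasDerivWithinAt) hinj]
  refine setIntegral_congr_fun measurableSet_Ioi fun u hu => ?_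
  rw [abs_of_pos (by linarith [hpos u hu])]

theorem integral_Ioo_zero_pi_div_two_eq_integral_comp_arctan {E : Type*} [NormedAddCommGroup E]
    [NormedSpace ℝ E] (g : ℝ → E) :
    ∫ x in Ioo 0 (π / 2), g x = ∫ t in Ioi 0, (1 + t ^ 2)⁻¹ • g (arctan t) := by
  have himage : arctan '' Ioi 0 = Ioo 0 (π / 2) := by
    ext x
    constructor
    · rintro ⟨t, ht, rfl⟩
      exact ⟨arctan_zero ▸ arctan_strictMono ht, arctan_lt_pi_div_two t⟩
    · rintro ⟨h0, hpi⟩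
      exact ⟨tan x, tan_pos_of_pos_of_lt_pi_div_two h0 hpi, arctan_tan (by linarith) hpi⟩
  rw [← himage, integral_image_eq_integral_abs_deriv_smul measurableSet_Ioi
    (fun t _ => (hasDerivAt_arctan t).hasDerivWithinAt) arctan_injective.injOn]
  refine setIntegral_congr_fun measurableSet_Ioi fun t _ => ?_
  rw [abs_of_pos (by positivity), one_div]

theorem integral_comp_csc_sq {E : Type*} [NormedAddCommGroup E] [NormedSpace ℝ E] (f : ℝ → E) :
    ∫ x in (0:ℝ)..(π / 2), f ((1 / sin x) ^ 2) = ∫ t in Ioi 0, (1 + t ^ 2)⁻¹ • f (1 + t ^ 2) := by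
  have hreflect : ∫ x in (0:ℝ)..(π / 2), f ((1 / sin x) ^ 2)
      = ∫ x in (0:ℝ)..(π / 2), f ((1 / cos x) ^ 2) := by
    have := intervalIntegral.integral_comp_sub_left (fun x => f ((1 / sin x) ^ 2)) (π / 2)
      (a := 0) (b := π / 2)
    simp only [sub_self, sub_zero, sin_pi_div_two_sub] at this
    exact this.symm
  rw [hreflect, intervalIntegral.integral_of_le (by positivity), integral_Ioc_eq_integral_Ioo,
    integral_Ioo_zero_pi_div_two_eq_integral_comp_arctan]
  refine setIntegral_congr_fun measurableSet_Ioi fun t _ => ?_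
  rw [cos_arctan, one_div_one_div, sq_sqrt (by positivity)]

theorem integral_Ioi_exp_neg_mul {c : ℝ} (hc : 0 < c) (a : ℝ) :
    ∫ s in Ioi a, exp (-(s * c)) = exp (-(a * c)) / c := by
  have := integral_exp_mul_Ioi (neg_lt_zero.2 hc) a
  simp only [neg_mul, mul_comm c] at this
  rw [this, neg_div_neg_eq]

theorem integrable_exp_neg_mul_one_add_sq {a : ℝ} (ha : 0 < a) :
    Integrable (fun p : ℝ × ℝ => exp (-(p.2 * (1 + p.1 ^ 2))))
      ((volume.restrict (Ioi 0)).prod (volume.restrict (Ioi a))) := by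
  have hdom : Integrable (fun p : ℝ × ℝ => exp (-a * p.1 ^ 2) * exp (-1 * p.2))
      ((volume.restrict (Ioi 0)).prod (volume.restrict (Ioi a))) :=
    (integrable_exp_neg_mul_sq ha).restrict.mul_prod (exp_neg_integrableOn_Ioi a one_pos)
  refine hdom.mono' (by fun_prop) ?_
  rw [Measure.prod_restrict, ae_restrict_iff' (measurableSet_Ioi.prod measurableSet_Ioi)]
  filter_upwards with p ⟨_, hs⟩
  rw [norm_of_nonneg (exp_pos _).le, ← exp_add]
  apply exp_le_exp.2
  nlinarith [mem_Ioi.1 hs, sq_nonneg p.1]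

theorem integral_Ioi_inv_one_add_sq_mul_exp {a : ℝ} (ha : 0 < a) :
    ∫ t in Ioi 0, (1 + t ^ 2)⁻¹ * exp (-(a * (1 + t ^ 2)))
      = √π * ∫ u in Ioi √a, exp (-u ^ 2) := by
  calc ∫ t in Ioi 0, (1 + t ^ 2)⁻¹ * exp (-(a * (1 + t ^ 2)))
      = ∫ t in Ioi 0, ∫ s in Ioi a, exp (-(s * (1 + t ^ 2))) := by
        refine setIntegral_congr_fun measurableSet_Ioi fun t _ => ?_
        rw [integral_Ioi_exp_neg_mul (by positivity), inv_mul_eq_div]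
    _ = ∫ s in Ioi a, ∫ t in Ioi 0, exp (-(s * (1 + t ^ 2))) :=
        integral_integral_swap (integrable_exp_neg_mul_one_add_sq ha)
    _ = ∫ s in Ioi a, exp (-s) * (√(π / s) / 2) := by
        refine setIntegral_congr_fun measurableSet_Ioi fun s _ => ?_
        simp only [mul_add, mul_one, neg_add, exp_add, ← neg_mul]
        rw [integral_const_mul, integral_gaussian_Ioi]
    _ = ∫ u in Ioi √a, (2 * u) • (exp (-u ^ 2) * (√(π / u ^ 2) / 2)) :=
        (integral_Ioi_sqrt_comp_sq (fun s => exp (-s) * (√(π / s) / 2)) ha.le).symm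
    _ = √π * ∫ u in Ioi √a, exp (-u ^ 2) := by
        rw [← integral_const_mul]
        refine setIntegral_congr_fun measurableSet_Ioi fun u hu => ?_
        have hu0 : 0 < u := (sqrt_nonneg a).trans_lt hu
        rw [smul_eq_mul, sqrt_div' _ (sq_nonneg u), sqrt_sq hu0.le]
        field_simp

theorem integral_exp_neg_mul_csc_sq {a : ℝ} (ha : 0 < a) :
    ∫ x in (0:ℝ)..(π / 2), exp (-(a * (1 / sin x) ^ 2)) = π / 2 * erfc √a := by
  have hsubst := integral_comp_csc_sq fun y => exp (-(a * y))
  simp only [smul_eq_mul] at hsubst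
  rw [hsubst, integral_Ioi_inv_one_add_sq_mul_exp ha, erfc]
  field_simp
  rw [sq_sqrt pi_pos.le, mul_comm]

theorem stmt_5 :
    ∫ x in (0:ℝ)..(π / 2), Real.exp (-(1 / Real.sin x) ^ 2)
      = (π / 2) * erfc 1 := by
  simpa using integral_exp_neg_mul_csc_sq one_pos
end

section
/- The integral of exp(-arcsinh²(x)) over x from 0 to infinity equals (√π/2)·e^{1/4}. -/
open Real MeasureTheory

lemma gauss_shift (c : ℝ) : ∫ x : ℝ, Real.exp (-(x + c) ^ 2) = Real.sqrt π := by
  rw [MeasureTheory.integral_add_right_eq_self (fun x : ℝ => Real.exp (-x ^ 2)) c]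
  have := integral_gaussian 1
  simpa using this

lemma integrable_shift (c : ℝ) : Integrable (fun x : ℝ => Real.exp (-(x + c) ^ 2)) := by
  have h : Integrable (fun x : ℝ => Real.exp (-1 * x ^ 2)) := integrable_exp_neg_mul_sq one_pos
  have := h.comp_add_right c
  simpa using this

lemma full_integral : ∫ t : ℝ, Real.cosh t * Real.exp (-t ^ 2) = Real.sqrt π * Real.exp (1 / 4) := by
  have key : ∀ t : ℝ, Real.cosh t * Real.exp (-t ^ 2)
      = Real.exp (1/4) / 2 * (Real.exp (-(t + -(1/2)) ^ 2) + Real.exp (-(t + 1/2) ^ 2)) := by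
    intro t
    rw [Real.cosh_eq, div_mul_eq_mul_div, div_mul_eq_mul_div, mul_add, ← Real.exp_add,
      ← Real.exp_add, add_mul, ← Real.exp_add, ← Real.exp_add]
    ring_nf
  simp_rw [key]
  rw [integral_const_mul, MeasureTheory.integral_add (integrable_shift _) (integrable_shift _),
    gauss_shift, gauss_shift]
  ring

theorem stmt_8 :
    ∫ x in Set.Ioi (0:ℝ), Real.exp (-(Real.arsinh x) ^ 2)
      = (Real.sqrt π / 2) * Real.exp (1 / 4) := by
  have himg : Real.sinh '' Set.Ioi 0 = Set.Ioi 0 := by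
    ext x
    constructor
    · rintro ⟨t, ht, rfl⟩
      exact Real.sinh_pos_iff.2 ht
    · intro hx
      exact ⟨Real.arsinh x, Real.arsinh_pos_iff.2 hx, Real.sinh_arsinh x⟩
  have hder : ∀ t ∈ Set.Ioi (0:ℝ), HasDerivWithinAt Real.sinh (Real.cosh t) (Set.Ioi 0) t :=
    fun t _ => (Real.hasDerivAt_sinh t).hasDerivWithinAt
  have hinj : Set.InjOn Real.sinh (Set.Ioi 0) := Real.sinh_injective.injOn
  have := integral_image_eq_integral_abs_deriv_smul measurableSet_Ioi hder hinj
    (fun x => Real.exp (-(Real.arsinh x) ^ 2))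
  rw [himg] at this
  rw [this]
  have heq : ∀ t ∈ Set.Ioi (0:ℝ), |Real.cosh t| • Real.exp (-(Real.arsinh (Real.sinh t)) ^ 2)
      = Real.cosh t * Real.exp (-t ^ 2) := by
    intro t _
    rw [Real.arsinh_sinh, abs_of_pos (Real.cosh_pos t), smul_eq_mul]
  rw [setIntegral_congr_fun measurableSet_Ioi heq]
  have htwo : (2:ℝ) * ∫ t in Set.Ioi (0:ℝ), Real.cosh t * Real.exp (-t ^ 2)
      = Real.sqrt π * Real.exp (1 / 4) := by
    rw [← full_integral]
    rw [← integral_comp_abs (f := fun t => Real.cosh t * Real.exp (-t ^ 2))]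
    simp [Real.cosh_abs, sq_abs]
  linarith
end

section
/- The integral of exp(-x²)·ln(x) over x from 0 to infinity equals -(√π/4)·(γ + 2·ln 2), where γ is the Euler–Mascheroni constant. -/
/-!
Differentiating Euler's integral under the integral sign gives
`Γ'(s) = ∫₀^∞ t^(s-1) log t e^(-t) dt`, and the substitution `t = x²` turns the integral of the
theorem into `Γ'(1/2) / 4`; Mathlib knows `Γ'(1/2) = -√π (γ + 2 log 2)`.
-/

open Real MeasureTheory Set

theorem Real.hasDerivAt_Gamma_of_pos {s : ℝ} (hs : 0 < s) :
    HasDerivAt Gamma (∫ t in Ioi (0 : ℝ), t ^ (s - 1) * (log t * exp (-t))) s := by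
  have hΓ : HasDerivAt Complex.Gamma
      (∫ t : ℝ in Ioi 0, (t : ℂ) ^ ((s : ℂ) - 1) * (log t * exp (-t))) s := by
    refine (Complex.hasDerivAt_GammaIntegral (by simpa using hs)).congr_of_eventuallyEq ?_
    filter_upwards [(Complex.continuous_re.isOpen_preimage _ isOpen_Ioi).mem_nhds
      (by simpa using hs)] with z hz using Complex.Gamma_eq_integral hz
  have hcast : (∫ t : ℝ in Ioi 0, (t : ℂ) ^ ((s : ℂ) - 1) * (log t * exp (-t)))
      = ((∫ t in Ioi (0 : ℝ), t ^ (s - 1) * (log t * exp (-t)) : ℝ) : ℂ) := by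
    rw [← integral_complex_ofReal]
    refine setIntegral_congr_fun measurableSet_Ioi fun t ht => ?_
    push_cast [Complex.ofReal_cpow (le_of_lt ht)]
    rfl
  rw [hcast] at hΓ
  simpa [Complex.Gamma_ofReal] using hΓ.real_of_complex

theorem integral_rpow_neg_one_half_mul_log_mul_exp_neg :
    ∫ t in Ioi (0 : ℝ), t ^ (-(1 / 2) : ℝ) * (log t * exp (-t))
      = -√π * (eulerMascheroniConstant + 2 * log 2) := by
  have h := Real.hasDerivAt_Gamma_of_pos (s := 1 / 2) (by norm_num)
  norm_num at h
  exact h.unique hasDerivAt_Gamma_one_half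

theorem integral_exp_neg_sq_mul_log_eq :
    ∫ x in Ioi (0 : ℝ), exp (-x ^ 2) * log x
      = (1 / 4) * ∫ t in Ioi (0 : ℝ), t ^ (-(1 / 2) : ℝ) * (log t * exp (-t)) := by
  rw [← integral_comp_rpow_Ioi_of_pos (g := fun t ↦ t ^ (-(1 / 2) : ℝ) * (log t * exp (-t)))
    two_pos, ← integral_const_mul]
  refine setIntegral_congr_fun measurableSet_Ioi fun x (hx : 0 < x) => ?_
  have hinv : (x ^ (2 : ℝ)) ^ (-(1 / 2) : ℝ) = x⁻¹ := by
    rw [← rpow_mul hx.le]; norm_num [rpow_neg_one]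
  rw [hinv, rpow_ofNat, log_pow, smul_eq_mul]
  field_simp
  norm_num
  ring

theorem stmt_10 :
    ∫ x in Set.Ioi (0:ℝ), Real.exp (-x ^ 2) * Real.log x
      = -(Real.sqrt π / 4) * (Real.eulerMascheroniConstant + 2 * Real.log 2) := by
  rw [integral_exp_neg_sq_mul_log_eq, integral_rpow_neg_one_half_mul_log_mul_exp_neg]
  ring
end
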